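/- arXiv:2602.22842 — 3 statements merged into one kernel-verified Lean document; each statement's English description precedes it below -/
import Mathlib

section
/- Let n ≥ 1 be an integer and let a < b be real numbers. Then there exists a unique vector of real parameters θ = (c, δ_0, …, δ_{n-2}) satisfying α_j^a = w_j^a for all j = 0, …, n-1; it is given by the triangular recursion c = -(a+b)/2 and, for j = 1, …, n-1, δ_{n-1-j} = (-1)^{j+1} w_j^a - (a+c)^{j+1}/(j+1)! - Σ_{i=1}^{j-1} δ_{i+n-1-j} a^i/i!. -/
/-!
The weight equation for `j = 0` reads `-(a + c) = w_0^a`, and `w_0^a = (b - a)/2` because the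
sum defining it telescopes, `(m-1)!/(m+1)! = 1/m - 1/(m+1)`; this pins down `c`. For `j ≥ 1` the
`i = 0` term of the sum in `α_j^a` is `δ_{n-1-j}`, and the remaining terms only involve
`δ_{n-1-k}` with `k < j`, so the equations form a unitriangular system: writing
`f k = δ_{n-1-k}`, it is the recursion `f j = r j - Σ_{i=1}^{j-1} f (j-i) κ i`, which has exactly
one solution.
-/

open Finset intervalIntegral

/-- Hermite quadrature weight at `a`:
`w_j^a = (b-a)^(j+1) * n * Σ_{k=j}^{n-1} C(k,j) (n+k-j-1)!/(n+k+1)!`. -/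
noncomputable def wA (n : ℕ) (a b : ℝ) (j : ℕ) : ℝ :=
  (b - a) ^ (j + 1) * n * ∑ k ∈ Finset.Icc j (n - 1),
    (k.choose j : ℝ) * (Nat.factorial (n + k - j - 1)) / (Nat.factorial (n + k + 1))

/-- Hermite quadrature weight at `b`: `w_j^b = (-1)^j w_j^a`. -/
noncomputable def wB (n : ℕ) (a b : ℝ) (j : ℕ) : ℝ := (-1 : ℝ) ^ j * wA n a b j

/-- RIBP weight at `a`:
`α_j^a = (-1)^(j+1) [ (a+c)^(j+1)/(j+1)! + Σ_{i=0}^{j-1} δ_{i+n-1-j} a^i/i! ]`. -/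
noncomputable def alphaA (n : ℕ) (a c : ℝ) (δ : ℕ → ℝ) (j : ℕ) : ℝ :=
  (-1 : ℝ) ^ (j + 1) * ((a + c) ^ (j + 1) / (Nat.factorial (j + 1)) +
    ∑ i ∈ Finset.range j, δ (i + n - 1 - j) * a ^ i / (Nat.factorial i))

/-- RIBP weight at `b`:
`α_j^b = (-1)^j [ (b+c)^(j+1)/(j+1)! + Σ_{i=0}^{j-1} δ_{i+n-1-j} b^i/i! ]`. -/
noncomputable def alphaB (n : ℕ) (b c : ℝ) (δ : ℕ → ℝ) (j : ℕ) : ℝ :=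
  (-1 : ℝ) ^ j * ((b + c) ^ (j + 1) / (Nat.factorial (j + 1)) +
    ∑ i ∈ Finset.range j, δ (i + n - 1 - j) * b ^ i / (Nat.factorial i))

/-- Polynomial kernel `P(x,θ) = (x+c)^n/n! + Σ_{i=0}^{n-2} δ_i x^i/i!`. -/
noncomputable def Pker (n : ℕ) (c : ℝ) (δ : ℕ → ℝ) (x : ℝ) : ℝ :=
  (x + c) ^ n / (Nat.factorial n) + ∑ i ∈ Finset.range (n - 1), δ i * x ^ i / (Nat.factorial i)

section TriangularRecursion

variable {R : Type*} [Ring R]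

noncomputable def triangularSolution (r κ : ℕ → R) : ℕ → R
  | j => r j - ∑ i ∈ (Icc 1 (j - 1)).attach, triangularSolution r κ (j - i.1) * κ i.1
  decreasing_by
    have := mem_Icc.mp i.2
    omega

def IsTriangularSolution (r κ : ℕ → R) (N : ℕ) (f : ℕ → R) : Prop :=
  ∀ j, 1 ≤ j → j ≤ N → f j = r j - ∑ i ∈ Icc 1 (j - 1), f (j - i) * κ i

theorem triangularSolution_eq (r κ : ℕ → R) (j : ℕ) :
    triangularSolution r κ j =
      r j - ∑ i ∈ Icc 1 (j - 1), triangularSolution r κ (j - i) * κ i := by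
  rw [triangularSolution, sum_attach (Icc 1 (j - 1)) fun i => triangularSolution r κ (j - i) * κ i]

theorem isTriangularSolution_triangularSolution (r κ : ℕ → R) (N : ℕ) :
    IsTriangularSolution r κ N (triangularSolution r κ) :=
  fun j _ _ => triangularSolution_eq r κ j

theorem isTriangularSolution_congr {r κ f g : ℕ → R} {N : ℕ}
    (hfg : ∀ k, 1 ≤ k → k ≤ N → f k = g k) :
    IsTriangularSolution r κ N f ↔ IsTriangularSolution r κ N g := by
  have hsum : ∀ j, j ≤ N →
      ∑ i ∈ Icc 1 (j - 1), f (j - i) * κ i = ∑ i ∈ Icc 1 (j - 1), g (j - i) * κ i := by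
    intro j hj
    refine sum_congr rfl fun i hi => ?_
    have := mem_Icc.mp hi
    rw [hfg (j - i) (by omega) (by omega)]
  refine forall_congr' fun j => imp_congr_right fun hj1 => imp_congr_right fun hjN => ?_
  rw [hfg j hj1 hjN, hsum j hjN]

theorem IsTriangularSolution.eq {r κ f g : ℕ → R} {N : ℕ}
    (hf : IsTriangularSolution r κ N f) (hg : IsTriangularSolution r κ N g) :
    ∀ j, 1 ≤ j → j ≤ N → f j = g j := by
  intro j
  induction j using Nat.strong_induction_on with
  | _ j ih =>
    intro hj1 hjN
    rw [hf j hj1 hjN, hg j hj1 hjN]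
    congr 1
    refine sum_congr rfl fun i hi => ?_
    have := mem_Icc.mp hi
    rw [ih (j - i) (by omega) (by omega) (by omega)]

end TriangularRecursion

theorem factorial_pred_div_factorial_succ {m : ℕ} (hm : 1 ≤ m) :
    ((m - 1).factorial : ℝ) / (m + 1).factorial = 1 / m - 1 / (m + 1 : ℕ) := by
  obtain ⟨s, rfl⟩ : ∃ s, m = s + 1 := ⟨m - 1, by omega⟩
  rw [Nat.add_sub_cancel, Nat.factorial_succ, Nat.factorial_succ]
  have : (s.factorial : ℝ) ≠ 0 := by positivity
  push_cast
  field_simp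
  ring

theorem wA_zero {n : ℕ} (hn : 1 ≤ n) (a b : ℝ) : wA n a b 0 = (b - a) / 2 := by
  have hIcc : Icc 0 (n - 1) = range n := by
    ext k
    simp only [mem_Icc, mem_range]
    omega
  have htel : ∑ k ∈ range n, ((n + k - 1).factorial : ℝ) / (n + k + 1).factorial
      = 1 / (n : ℝ) - 1 / (2 * n) := by
    rw [sum_congr rfl fun k _ => factorial_pred_div_factorial_succ (m := n + k) (by omega)]
    refine (sum_range_sub' (fun k => 1 / ((n + k : ℕ) : ℝ)) n).trans ?_
    push_cast
    ring
  have hn0 : (n : ℝ) ≠ 0 := by positivity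
  simp only [wA, Nat.choose_zero_right, Nat.cast_one, one_mul, zero_add, pow_one,
    Nat.sub_zero, hIcc, htel]
  field_simp
  ring

theorem alphaA_zero (n : ℕ) (a c : ℝ) (δ : ℕ → ℝ) : alphaA n a c δ 0 = -(a + c) := by
  simp [alphaA]

theorem alphaA_eq_iff {n j : ℕ} (hj : 1 ≤ j) (a c w : ℝ) (δ : ℕ → ℝ) :
    alphaA n a c δ j = w ↔
      δ (n - 1 - j) = (-1 : ℝ) ^ (j + 1) * w - (a + c) ^ (j + 1) / (j + 1).factorial
        - ∑ i ∈ Icc 1 (j - 1), δ (i + n - 1 - j) * a ^ i / i.factorial := by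
  have hsplit : range j = insert 0 (Icc 1 (j - 1)) := by
    ext i
    simp only [mem_range, mem_insert, mem_Icc]
    omega
  have hsq : (-1 : ℝ) ^ (j + 1) * (-1) ^ (j + 1) = 1 := by
    rw [← pow_add, ← two_mul, pow_mul, neg_one_sq, one_pow]
  rw [alphaA, hsplit, sum_insert (by simp)]
  simp only [zero_add, pow_zero, Nat.factorial_zero, Nat.cast_one, mul_one, div_one]
  constructor <;> intro h
  · linear_combination (-1 : ℝ) ^ (j + 1) * h - ((a + c) ^ (j + 1) / (j + 1).factorial
      + δ (n - 1 - j) + ∑ i ∈ Icc 1 (j - 1), δ (i + n - 1 - j) * a ^ i / i.factorial) * hsq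
  · linear_combination (-1 : ℝ) ^ (j + 1) * h + w * hsq

theorem forall_alphaA_eq_iff {n : ℕ} (a c : ℝ) (δ w : ℕ → ℝ) :
    (∀ j < n, alphaA n a c δ j = w j) ↔
      (1 ≤ n → -(a + c) = w 0) ∧ ∀ j, 1 ≤ j → j ≤ n - 1 →
        δ (n - 1 - j) = (-1 : ℝ) ^ (j + 1) * w j - (a + c) ^ (j + 1) / (j + 1).factorial
          - ∑ i ∈ Icc 1 (j - 1), δ (i + n - 1 - j) * a ^ i / i.factorial := by
  refine ⟨fun h => ⟨fun hn => ?_, fun j hj1 hjn => ?_⟩, fun ⟨h0, h⟩ j hj => ?_⟩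
  · rw [← alphaA_zero n a c δ, h 0 hn]
  · exact (alphaA_eq_iff hj1 a c _ δ).mp (h j (by omega))
  · rcases Nat.eq_zero_or_pos j with rfl | hj1
    · rw [alphaA_zero, h0 hj]
    · exact (alphaA_eq_iff hj1 a c _ δ).mpr (h j hj1 (by omega))

theorem weight_recursion_iff_isTriangularSolution (n : ℕ) (a : ℝ) (r δ : ℕ → ℝ) :
    (∀ j, 1 ≤ j → j ≤ n - 1 →
        δ (n - 1 - j) = r j - ∑ i ∈ Icc 1 (j - 1), δ (i + n - 1 - j) * a ^ i / i.factorial) ↔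
      IsTriangularSolution r (fun i => a ^ i / i.factorial) (n - 1) fun k => δ (n - 1 - k) := by
  refine forall_congr' fun j => imp_congr_right fun _ => imp_congr_right fun hjn => ?_
  rw [sum_congr rfl fun i hi => ?_]
  have := mem_Icc.mp hi
  rw [mul_div_assoc, show i + n - 1 - j = n - 1 - (j - i) by omega]

theorem stmt9_general (n : ℕ) (hn : 1 ≤ n) (a b : ℝ) :
    ∃ (c : ℝ) (δ : ℕ → ℝ),
      (∀ j < n, alphaA n a c δ j = wA n a b j)
      ∧ c = -(a + b) / 2
      ∧ (∀ j, 1 ≤ j → j ≤ n - 1 →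
          δ (n - 1 - j) = (-1 : ℝ) ^ (j + 1) * wA n a b j
            - (a + c) ^ (j + 1) / (Nat.factorial (j + 1))
            - ∑ i ∈ Finset.Icc 1 (j - 1), δ (i + n - 1 - j) * a ^ i / (Nat.factorial i))
      ∧ (∀ (c' : ℝ) (δ' : ℕ → ℝ), (∀ j < n, alphaA n a c' δ' j = wA n a b j) →
          c' = c ∧ ∀ i < n - 1, δ' i = δ i) := by
  set c := -(a + b) / 2 with hc
  set r : ℕ → ℝ := fun j => (-1 : ℝ) ^ (j + 1) * wA n a b j - (a + c) ^ (j + 1) / (j + 1).factorial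
  set f := triangularSolution r fun i => a ^ i / i.factorial
  have hsol : IsTriangularSolution r (fun i => a ^ i / i.factorial) (n - 1)
      fun k => f (n - 1 - (n - 1 - k)) :=
    (isTriangularSolution_congr fun k _ hk => by rw [Nat.sub_sub_self hk]).mpr
      (isTriangularSolution_triangularSolution _ _ _)
  have hrec := (weight_recursion_iff_isTriangularSolution n a r fun m => f (n - 1 - m)).mpr hsol
  refine ⟨c, fun m => f (n - 1 - m),
    (forall_alphaA_eq_iff a c _ _).mpr ⟨fun _ => by rw [wA_zero hn]; ring, hrec⟩, rfl, hrec,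
    fun c' δ' h => ?_⟩
  obtain ⟨h0, h'⟩ := (forall_alphaA_eq_iff a c' δ' _).mp h
  obtain rfl : c' = c := by linarith [h0 hn, wA_zero hn a b, hc]
  refine ⟨rfl, fun i hi => ?_⟩
  have := ((weight_recursion_iff_isTriangularSolution n a r δ').mp h').eq hsol
    (n - 1 - i) (by omega) (by omega)
  simpa only [Nat.sub_sub_self hi.le] using this

/-- there is a unique set of parameters `θ = (c, δ_0, …, δ_{n-2})` satisfying
`α_j^a = w_j^a` for all `j = 0, …, n-1`; it is given by `c = -(a+b)/2` and the triangular
recursion `δ_{n-1-j} = (-1)^(j+1) w_j^a - (a+c)^(j+1)/(j+1)! - Σ_{i=1}^{j-1} δ_{i+n-1-j} a^i/i!`. -/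
theorem stmt9 (n : ℕ) (hn : 1 ≤ n) (a b : ℝ) (hab : a < b) :
    ∃ (c : ℝ) (δ : ℕ → ℝ),
      (∀ j < n, alphaA n a c δ j = wA n a b j)
      ∧ c = -(a + b) / 2
      ∧ (∀ j, 1 ≤ j → j ≤ n - 1 →
          δ (n - 1 - j) = (-1 : ℝ) ^ (j + 1) * wA n a b j
            - (a + c) ^ (j + 1) / (Nat.factorial (j + 1))
            - ∑ i ∈ Finset.Icc 1 (j - 1), δ (i + n - 1 - j) * a ^ i / (Nat.factorial i))
      ∧ (∀ (c' : ℝ) (δ' : ℕ → ℝ), (∀ j < n, alphaA n a c' δ' j = wA n a b j) →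
          c' = c ∧ ∀ i < n - 1, δ' i = δ i) :=
  stmt9_general n hn a b
end

section
/- Let n ≥ 1 be an integer and let a < b be real numbers. The Hermite quadrature rule is exact on polynomials of degree at most 2n-1: for every polynomial f of degree ≤ 2n-1, ∫_a^b f(x) dx = Σ_{j=0}^{n-1} w_j^a f^{(j)}(a) + Σ_{j=0}^{n-1} w_j^b f^{(j)}(b). -/
open Finset intervalIntegral

/-!
Darboux's formula with the kernel `K = (X - a)ⁿ (X - b)ⁿ`: since `K⁽²ⁿ⁾ = (2n)!` and `f⁽²ⁿ⁾ = 0`,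
`2n` integrations by parts give `(2n)! ∫ₐᵇ f = [∑ᵢ (-1)ⁱ K⁽²ⁿ⁻¹⁻ⁱ⁾ f⁽ⁱ⁾]ₐᵇ`. Expanding `K` in powers
of `X - a` shows that `K⁽²ⁿ⁻¹⁻ʲ⁾(a) = (2n-1-j)! C(n, j+1) (a - b)ʲ⁺¹` for `j < n` and that the
lower derivatives vanish at `a`; symmetrically at `b`. Finally the hypergeometric sum defining
`w_jᵃ` is Gosper-summable, which yields `w_jᵃ = C(n, j+1) (2n-1-j)! / (2n)! · (b - a)ʲ⁺¹`.
-/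

open Polynomial Nat

theorem sum_range_choose_mul_factorial_div_factorial (m j T : ℕ) :
    ((m + 1) * (j + 1) : ℝ) * ∑ t ∈ range T, ((j + t).choose j : ℝ) * (m + t)! / (m + j + t + 2)!
      = T * (m + j + T + 2) * (j + T).choose j * (m + T)! / (m + j + T + 2)! := by
  induction T with
  | zero => simp
  | succ T ih =>
    have hchoose : ((j + T + 1).choose j : ℝ) * (T + 1) = (j + T).choose j * (j + T + 1) := by
      have := Nat.choose_mul_succ_eq (j + T) j
      rw [show j + T + 1 - j = T + 1 by omega] at this
      exact_mod_cast this.symm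
    rw [sum_range_succ, mul_add, ih, ← add_assoc j T 1, ← add_assoc m T 1,
      show m + j + (T + 1) + 2 = m + j + T + 2 + 1 by omega, factorial_succ (m + T),
      factorial_succ (m + j + T + 2)]
    push_cast
    field_simp
    linear_combination -(m + j + T + 3 : ℝ) * (m + T + 1) * hchoose

theorem wA_eq_choose_mul_factorial_div_factorial (n : ℕ) (a b : ℝ) {j : ℕ} (hj : j < n) :
    wA n a b j = n.choose (j + 1) * (2 * n - 1 - j)! / (2 * n)! * (b - a) ^ (j + 1) := by
  obtain ⟨s, rfl⟩ : ∃ s, n = j + s + 1 := ⟨n - j - 1, by omega⟩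
  have hsum := sum_range_choose_mul_factorial_div_factorial (j + s) j (s + 1)
  have hchoose : ((j + s + 1).choose (j + 1) : ℝ) * (j + 1) = (j + s + 1).choose j * (s + 1) := by
    have := Nat.choose_succ_right_eq (j + s + 1) j
    rw [show j + s + 1 - j = s + 1 by omega] at this
    exact_mod_cast this
  have hIcc : Icc j (j + s + 1 - 1) = Ico j (j + s + 1) := by
    ext k; simp only [mem_Icc, mem_Ico]; omega
  rw [wA, hIcc, sum_Ico_eq_sum_range, show j + s + 1 - j = s + 1 by omega,
    show 2 * (j + s + 1) - 1 - j = j + s + (s + 1) by omega,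
    show 2 * (j + s + 1) = 2 * j + 2 * s + 2 by omega]
  simp only [show ∀ t, j + s + 1 + (j + t) - j - 1 = j + s + t by omega,
    show ∀ t, j + s + 1 + (j + t) + 1 = j + s + j + t + 2 by omega]
  rw [show j + s + j + (s + 1) + 2 = 2 * j + 2 * s + 2 + 1 by omega, factorial_succ,
    show j + (s + 1) = j + s + 1 by omega] at hsum
  push_cast at hsum ⊢
  field_simp at hsum ⊢
  refine mul_left_cancel₀ (show ((j + 1) * (2 * j + 2 * s + 3) : ℝ) ≠ 0 by positivity) ?_
  linear_combination (b - a) ^ (j + 1) * hsum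
    - (2 * j + 2 * s + 3 : ℝ) * (j + s + (s + 1))! * (b - a) ^ (j + 1) * hchoose

section CommRing

variable {R : Type*} [CommRing R]

theorem derivative_sum_range_neg_one_pow_mul_iterate_derivative (K f : R[X]) (N : ℕ) :
    derivative (∑ i ∈ range N, (-1) ^ i * (derivative^[N - 1 - i] K * derivative^[i] f))
      = derivative^[N] K * f - (-1) ^ N * (K * derivative^[N] f) := by
  let g : ℕ → R[X] := fun i ↦ (-1) ^ i * (derivative^[N - i] K * derivative^[i] f)
  have hterm : ∀ i ∈ range N,
      derivative ((-1) ^ i * (derivative^[N - 1 - i] K * derivative^[i] f)) = g i - g (i + 1) := by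
    intro i hi
    have hNi : N - i = N - 1 - i + 1 := by have := mem_range.mp hi; omega
    simp only [g, hNi, show N - (i + 1) = N - 1 - i by omega, derivative_mul, derivative_pow,
      derivative_neg, derivative_one, Function.iterate_succ_apply']
    ring
  rw [derivative_sum, sum_congr rfl hterm, sum_range_sub']
  simp [g]

theorem eval_iterate_derivative_eq_factorial_mul_coeff_taylor (p : R[X]) (m : ℕ) (r : R) :
    (derivative^[m] p).eval r = m ! * (taylor r p).coeff m := by
  rw [taylor_coeff, ← factorial_smul_hasseDeriv, LinearMap.smul_apply, eval_smul, nsmul_eq_mul]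

theorem eval_iterate_derivative_X_sub_C_pow_mul_X_sub_C_pow (c d : R) (n m : ℕ) :
    (derivative^[m] ((X - C c) ^ n * (X - C d) ^ n)).eval c
      = if n ≤ m then m ! * ((c - d) ^ (n - (m - n)) * n.choose (m - n)) else 0 := by
  have htaylor : taylor c ((X - C c) ^ n * (X - C d) ^ n) = X ^ n * (X + C (c - d)) ^ n := by
    simp only [taylor_mul, taylor_pow, taylor_X, taylor_C, map_sub]
    ring
  rw [eval_iterate_derivative_eq_factorial_mul_coeff_taylor, htaylor, coeff_X_pow_mul',
    coeff_X_add_C_pow]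
  split_ifs <;> simp

theorem iterate_derivative_two_mul_X_sub_C_pow_mul_X_sub_C_pow (c d : R) (n : ℕ) :
    derivative^[2 * n] ((X - C c) ^ n * (X - C d) ^ n) = C ((2 * n)! : R) := by
  have hdeg : ((X - C c) ^ n * (X - C d) ^ n).natDegree ≤ 2 * n := by
    compute_degree
    omega
  have hconst := eq_C_of_natDegree_le_zero
    ((natDegree_iterate_derivative ((X - C c) ^ n * (X - C d) ^ n) (2 * n)).trans
      (by omega : _ - 2 * n ≤ 0))
  have heval := congrArg (eval c) hconst
  rw [eval_C, eval_iterate_derivative_X_sub_C_pow_mul_X_sub_C_pow, if_pos (by omega),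
    show 2 * n - n = n by omega] at heval
  rw [hconst, ← heval]
  simp

theorem eval_sum_range_two_mul_neg_one_pow_mul_iterate_derivative (c d : R) (f : R[X]) (n : ℕ) :
    (∑ i ∈ range (2 * n), (-1) ^ i *
        (derivative^[2 * n - 1 - i] ((X - C c) ^ n * (X - C d) ^ n) * derivative^[i] f)).eval c
      = ∑ i ∈ range n, (-1) ^ i * ((2 * n - 1 - i)! * ((c - d) ^ (i + 1) * n.choose (i + 1)))
          * (derivative^[i] f).eval c := by
  rw [eval_finsetSum, ← sum_subset (range_subset_range.mpr (by omega : n ≤ 2 * n))]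
  · refine sum_congr rfl fun i hi ↦ ?_
    have hin := mem_range.mp hi
    rw [eval_mul, eval_mul, eval_pow, eval_neg, eval_one,
      eval_iterate_derivative_X_sub_C_pow_mul_X_sub_C_pow, if_pos (by omega),
      show 2 * n - 1 - i - n = n - 1 - i by omega, show n - (n - 1 - i) = i + 1 by omega,
      Nat.choose_symm_of_eq_add (by omega : n = n - 1 - i + (i + 1))]
    ring
  · intro i hi hin
    rw [mem_range] at hi
    rw [mem_range, not_lt] at hin
    rw [eval_mul, eval_mul, eval_iterate_derivative_X_sub_C_pow_mul_X_sub_C_pow, if_neg (by omega)]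
    simp

end CommRing

theorem integral_eval_iterate_derivative_mul_eval (K f : ℝ[X]) {N : ℕ}
    (hf : derivative^[N] f = 0) (a b : ℝ) :
    ∫ x in a..b, (derivative^[N] K).eval x * f.eval x
      = (∑ i ∈ range N, (-1) ^ i * (derivative^[N - 1 - i] K * derivative^[i] f)).eval b
        - (∑ i ∈ range N, (-1) ^ i * (derivative^[N - 1 - i] K * derivative^[i] f)).eval a := by
  set G := ∑ i ∈ range N, (-1) ^ i * (derivative^[N - 1 - i] K * derivative^[i] f)
  have hG : derivative G = derivative^[N] K * f := by
    rw [derivative_sum_range_neg_one_pow_mul_iterate_derivative, hf, mul_zero, mul_zero, sub_zero]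
  simp_rw [← eval_mul, ← hG]
  exact integral_eq_sub_of_hasDerivAt (fun x _ ↦ G.hasDerivAt x)
    (G.derivative.continuous.intervalIntegrable _ _)

theorem stmt13_general (n : ℕ) (hn : 1 ≤ n) (a b : ℝ) :
    ∀ f : Polynomial ℝ, f.degree ≤ ((2 * n - 1 : ℕ) : WithBot ℕ) →
      ∫ x in a..b, f.eval x
        = (∑ j ∈ Finset.range n, wA n a b j * (Polynomial.derivative^[j] f).eval a)
          + (∑ j ∈ Finset.range n, wB n a b j * (Polynomial.derivative^[j] f).eval b) := by
  intro f hf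
  have hf_deriv : derivative^[2 * n] f = 0 :=
    iterate_derivative_eq_zero ((natDegree_le_iff_degree_le.mpr hf).trans_lt (by omega))
  have hdarboux := integral_eval_iterate_derivative_mul_eval ((X - C a) ^ n * (X - C b) ^ n) f
    hf_deriv a b
  rw [eval_sum_range_two_mul_neg_one_pow_mul_iterate_derivative a b, mul_comm ((X - C a) ^ n),
    eval_sum_range_two_mul_neg_one_pow_mul_iterate_derivative b a,
    iterate_derivative_two_mul_X_sub_C_pow_mul_X_sub_C_pow] at hdarboux
  simp only [eval_C, integral_const_mul] at hdarboux
  refine mul_left_cancel₀ (show ((2 * n)! : ℝ) ≠ 0 by positivity) ?_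
  rw [hdarboux, mul_add, mul_sum, mul_sum, sub_eq_neg_add, ← sum_neg_distrib]
  congr 1 <;> refine sum_congr rfl fun j hj ↦ ?_
  · rw [wA_eq_choose_mul_factorial_div_factorial n a b (mem_range.mp hj)]
    have hsign : (-1 : ℝ) ^ j * (a - b) ^ (j + 1) = -(b - a) ^ (j + 1) := by
      rw [← neg_sub b a, neg_pow (b - a), ← mul_assoc, ← pow_add, Odd.neg_one_pow ⟨j, by ring⟩,
        neg_one_mul]
    field_simp
    linear_combination -(n.choose (j + 1) * (derivative^[j] f).eval a : ℝ) * hsign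
  · rw [wB, wA_eq_choose_mul_factorial_div_factorial n a b (mem_range.mp hj)]
    field_simp

/-- the Hermite quadrature rule is exact on polynomials of degree ≤ 2n-1. -/
theorem stmt13 (n : ℕ) (hn : 1 ≤ n) (a b : ℝ) (hab : a < b) :
    ∀ f : Polynomial ℝ, f.degree ≤ ((2 * n - 1 : ℕ) : WithBot ℕ) →
      ∫ x in a..b, f.eval x
        = (∑ j ∈ Finset.range n, wA n a b j * (Polynomial.derivative^[j] f).eval a)
          + (∑ j ∈ Finset.range n, wB n a b j * (Polynomial.derivative^[j] f).eval b) :=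
  stmt13_general n hn a b
end

section
/- Let n ≥ 1 be an integer, let a < b be real numbers, and suppose the real parameters θ = (c, δ_0, …, δ_{n-2}) satisfy α_j^a = w_j^a and α_j^b = w_j^b for all j = 0, …, n-1. Then for every f : ℝ → ℝ that is n-times continuously differentiable on [a,b], the Hermite quadrature error admits the exact representation ∫_a^b f(x) dx = Σ_{j=0}^{n-1} w_j^a f^{(j)}(a) + Σ_{j=0}^{n-1} w_j^b f^{(j)}(b) + ∫_a^b (-1)^n f^{(n)}(x) P(x,θ) dx, which requires only the n-th (rather than the 2n-th) derivative of f. -/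
open Finset intervalIntegral

/-!
Let `S₀ = 1, S₁, …, Sₙ = P(·,θ)` be the chain with `S_{m+1}' = S_m`. Integrating by parts `n` times
gives `∫ f = Σ_j (-1)^j [f⁽ʲ⁾ S_{j+1}]_a^b + (-1)^n ∫ f⁽ⁿ⁾ P`, and up to sign `S_{j+1}(a)` and
`S_{j+1}(b)` are the RIBP weights `α_j^a`, `α_j^b`. The matching conditions therefore turn the
boundary terms into the Hermite quadrature sum, and no derivative beyond the `n`-th appears.
-/

open Set in
theorem integral_mul_eq_sum_add_integral_of_hasDerivAt {a b : ℝ} {u v : ℕ → ℝ → ℝ} {n : ℕ}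
    (hu : ∀ m ≤ n, ContinuousOn (u m) (uIcc a b)) (hv : ∀ m ≤ n, ContinuousOn (v m) (uIcc a b))
    (hu' : ∀ m < n, ∀ x ∈ Ioo (min a b) (max a b), HasDerivAt (u m) (u (m + 1) x) x)
    (hv' : ∀ m < n, ∀ x ∈ Ioo (min a b) (max a b), HasDerivAt (v (m + 1)) (v m x) x) :
    ∫ x in a..b, u 0 x * v 0 x =
      ∑ j ∈ range n, (-1) ^ j * (u j b * v (j + 1) b - u j a * v (j + 1) a) +
        (-1) ^ n * ∫ x in a..b, u n x * v n x := by
  induction n with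
  | zero => simp
  | succ n ih =>
    have hparts : ∫ x in a..b, u n x * v n x =
        u n b * v (n + 1) b - u n a * v (n + 1) a - ∫ x in a..b, u (n + 1) x * v (n + 1) x :=
      integral_mul_deriv_eq_deriv_mul_of_hasDerivAt (hu n n.le_succ) (hv (n + 1) le_rfl)
        (hu' n n.lt_succ_self) (hv' n n.lt_succ_self)
        ((hu (n + 1) le_rfl).intervalIntegrable) ((hv n n.le_succ).intervalIntegrable)
    rw [ih (fun m hm ↦ hu m (by omega)) (fun m hm ↦ hv m (by omega))
      (fun m hm ↦ hu' m (by omega)) (fun m hm ↦ hv' m (by omega)), hparts, sum_range_succ,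
      pow_succ]
    ring

theorem ContDiffOn.hasDerivAt_iteratedDerivWithin {𝕜 F : Type*} [NontriviallyNormedField 𝕜]
    [NormedAddCommGroup F] [NormedSpace 𝕜 F] {f : 𝕜 → F} {s : Set 𝕜} {x : 𝕜}
    {n : WithTop ℕ∞} {m : ℕ} (hf : ContDiffOn 𝕜 n f s) (hs : UniqueDiffOn 𝕜 s) (hm : m < n)
    (hx : s ∈ nhds x) :
    HasDerivAt (iteratedDerivWithin m f s) (iteratedDerivWithin (m + 1) f s x) x := by
  have hdiff := hf.differentiableOn_iteratedDerivWithin hm hs x (mem_of_mem_nhds hx)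
  rw [iteratedDerivWithin_succ]
  exact hdiff.hasDerivWithinAt.hasDerivAt hx

open Nat in
theorem hasDerivAt_pow_succ_div_factorial (k : ℕ) (x : ℝ) :
    HasDerivAt (fun x : ℝ ↦ x ^ (k + 1) / (k + 1)!) (x ^ k / k !) x := by
  refine ((hasDerivAt_pow (k + 1) x).div_const ((k + 1)! : ℝ)).congr_deriv ?_
  rw [factorial_succ]
  push_cast
  field_simp

open Nat in
theorem hasDerivAt_sum_range_mul_pow_div_factorial (g : ℕ → ℝ) (k : ℕ) (x : ℝ) :
    HasDerivAt (fun x : ℝ ↦ ∑ i ∈ range (k + 1), g i * x ^ i / i !)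
      (∑ i ∈ range k, g (i + 1) * x ^ i / i !) x := by
  induction k with
  | zero => simpa using hasDerivAt_const x (g 0)
  | succ k ih =>
    have hlast := (hasDerivAt_pow_succ_div_factorial k x).const_mul (g (k + 1))
    simp only [← mul_div_assoc] at hlast
    simp only [sum_range_succ _ (k + 1)]
    exact (ih.add hlast).congr_deriv (sum_range_succ _ k).symm

/-- `PkerDeriv n c δ m` is the `(n - m)`-th derivative of `Pker n c δ` for `m ≤ n`. -/
noncomputable def PkerDeriv (n : ℕ) (c : ℝ) (δ : ℕ → ℝ) : ℕ → ℝ → ℝ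
  | 0 => fun _ ↦ 1
  | j + 1 => fun x ↦ (x + c) ^ (j + 1) / (Nat.factorial (j + 1)) +
      ∑ i ∈ Finset.range j, δ (i + n - 1 - j) * x ^ i / (Nat.factorial i)

theorem alphaA_eq_PkerDeriv (n : ℕ) (a c : ℝ) (δ : ℕ → ℝ) (j : ℕ) :
    alphaA n a c δ j = (-1) ^ (j + 1) * PkerDeriv n c δ (j + 1) a := rfl

theorem alphaB_eq_PkerDeriv (n : ℕ) (b c : ℝ) (δ : ℕ → ℝ) (j : ℕ) :
    alphaB n b c δ j = (-1) ^ j * PkerDeriv n c δ (j + 1) b := rfl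

theorem PkerDeriv_self (n : ℕ) (c : ℝ) (δ : ℕ → ℝ) : PkerDeriv n c δ n = Pker n c δ := by
  cases n with
  | zero => funext x; simp [PkerDeriv, Pker]
  | succ k =>
    funext x
    have hidx : ∀ i, i + (k + 1) - 1 - k = i := fun i ↦ by omega
    simp only [PkerDeriv, Pker, hidx, Nat.add_sub_cancel]

theorem hasDerivAt_PkerDeriv (n : ℕ) (c : ℝ) (δ : ℕ → ℝ) (m : ℕ) (x : ℝ) :
    HasDerivAt (PkerDeriv n c δ (m + 1)) (PkerDeriv n c δ m x) x := by
  cases m with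
  | zero => simpa [PkerDeriv] using (hasDerivAt_id x).add_const c
  | succ k =>
    have hidx : ∀ i, i + 1 + n - 1 - (k + 1) = i + n - 1 - k := fun i ↦ by omega
    have hsum := hasDerivAt_sum_range_mul_pow_div_factorial (fun i ↦ δ (i + n - 1 - (k + 1))) k x
    simp only [hidx] at hsum
    exact ((hasDerivAt_pow_succ_div_factorial (k + 1) (x + c)).comp_add_const x c).add hsum

theorem continuous_PkerDeriv (n : ℕ) (c : ℝ) (δ : ℕ → ℝ) (m : ℕ) :
    Continuous (PkerDeriv n c δ m) := by
  cases m with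
  | zero => exact continuous_const
  | succ k => exact continuous_iff_continuousAt.2 fun x ↦
      (hasDerivAt_PkerDeriv n c δ k x).continuousAt

theorem stmt14_general (n : ℕ) (a b : ℝ) (hab : a < b) (c : ℝ) (δ : ℕ → ℝ)
    (hmatch : ∀ j < n, alphaA n a c δ j = wA n a b j ∧ alphaB n b c δ j = wB n a b j) :
    ∀ f : ℝ → ℝ, ContDiffOn ℝ (n : ℕ∞) f (Set.Icc a b) →
      ∫ x in a..b, f x
        = (∑ j ∈ Finset.range n, wA n a b j * iteratedDerivWithin j f (Set.Icc a b) a)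
          + (∑ j ∈ Finset.range n, wB n a b j * iteratedDerivWithin j f (Set.Icc a b) b)
          + ∫ x in a..b, (-1 : ℝ) ^ n * iteratedDerivWithin n f (Set.Icc a b) x * Pker n c δ x := by
  intro f hf
  set s := Set.Icc a b
  have hs : UniqueDiffOn ℝ s := uniqueDiffOn_Icc hab
  have hparts := integral_mul_eq_sum_add_integral_of_hasDerivAt
    (u := fun m ↦ iteratedDerivWithin m f s) (v := PkerDeriv n c δ)
    (fun m hm ↦ by
      rw [Set.uIcc_of_le hab.le]
      exact hf.continuousOn_iteratedDerivWithin (by exact_mod_cast hm) hs)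
    (fun m _ ↦ (continuous_PkerDeriv n c δ m).continuousOn)
    (fun m hm x hx ↦ by
      rw [min_eq_left hab.le, max_eq_right hab.le] at hx
      exact hf.hasDerivAt_iteratedDerivWithin hs (by exact_mod_cast hm) (Icc_mem_nhds hx.1 hx.2))
    (fun m _ x _ ↦ hasDerivAt_PkerDeriv n c δ m x)
  simp only [iteratedDerivWithin_zero, PkerDeriv.eq_1, mul_one, PkerDeriv_self] at hparts
  have hboundary : ∑ j ∈ range n, (-1) ^ j * (iteratedDerivWithin j f s b * PkerDeriv n c δ (j + 1) b
        - iteratedDerivWithin j f s a * PkerDeriv n c δ (j + 1) a)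
      = (∑ j ∈ range n, wA n a b j * iteratedDerivWithin j f s a)
        + (∑ j ∈ range n, wB n a b j * iteratedDerivWithin j f s b) := by
    rw [← sum_add_distrib]
    refine sum_congr rfl fun j hj ↦ ?_
    obtain ⟨hA, hB⟩ := hmatch j (mem_range.1 hj)
    rw [← hA, ← hB, alphaA_eq_PkerDeriv, alphaB_eq_PkerDeriv]
    ring
  simp_rw [mul_assoc, integral_const_mul]
  rw [hparts, hboundary]

/-- if the parameters match the Hermite weights at both endpoints, then the
Hermite quadrature error admits the exact representation
`∫ f = Σ w_j^a f⁽ʲ⁾(a) + Σ w_j^b f⁽ʲ⁾(b) + ∫ (-1)^n f⁽ⁿ⁾ P(·,θ)`,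
requiring only the `n`-th derivative of `f`. -/
theorem stmt14 (n : ℕ) (hn : 1 ≤ n) (a b : ℝ) (hab : a < b) (c : ℝ) (δ : ℕ → ℝ)
    (hmatch : ∀ j < n, alphaA n a c δ j = wA n a b j ∧ alphaB n b c δ j = wB n a b j) :
    ∀ f : ℝ → ℝ, ContDiffOn ℝ (n : ℕ∞) f (Set.Icc a b) →
      ∫ x in a..b, f x
        = (∑ j ∈ Finset.range n, wA n a b j * iteratedDerivWithin j f (Set.Icc a b) a)
          + (∑ j ∈ Finset.range n, wB n a b j * iteratedDerivWithin j f (Set.Icc a b) b)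
          + ∫ x in a..b, (-1 : ℝ) ^ n * iteratedDerivWithin n f (Set.Icc a b) x * Pker n c δ x :=
  stmt14_general n a b hab c δ hmatch
end
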